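/- Let α ∈ (0,1), β ∈ (α,1) and let d ≥ 1 be an integer. Let λ:[0,T]→[0,∞) be measurable with ∫₀^T ( λ(t) + λ(t)^{1/(1−α)} + λ(t)^{2/(2−α)} ) dt < +∞. On a probability space (Ω,F,P), let (f_t) be a nonnegative measurable process with E[∫₀^T f_s ds] < +∞, let (Y_t) be a real-valued measurable process with E[sup_{t∈[0,T]} |Y_t|^β] < +∞, and let (Z_t), (Z'_t) be ℝ^d-valued measurable processes with E[(∫₀^T |Z_s|² ds)^{β/2}] < +∞ and E[(∫₀^T |Z'_s|² ds)^{β/2}] < +∞. Define φ_s := 2λ(s)(f_s + |Y_s| + |Z_s| + |Z'_s|)^α. Then E[(∫₀^T φ_s ds)^{β/α}] < +∞. (Integrability estimate (21) in the proof of Theorem 2.4.) -/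

import Mathlib

/-! Since `x ↦ x ^ α` is subadditive, `φ` is at most `2λ` times the sum of the `α`-th powers
of `f`, `|Y|`, `|Z|`, `|Z'|`. Hölder's inequality with exponents `1/(1-α)`, `1/α` bounds
`∫ λ f^α` by `‖λ‖_{1/(1-α)} (∫ f)^α`, and with exponents `2/(2-α)`, `2/α` it bounds `∫ λ |Z|^α`
by `‖λ‖_{2/(2-α)} (∫ |Z|²)^{α/2}`; the `Y`-term is at most `(∫ λ) (sup |Y|^β)^{α/β}`. Raised to
the power `β/α ≥ 1`, these bounds become multiples of `(∫ f)^β ≤ 1 + ∫ f`, `sup |Y|^β` and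
`(∫ |Z|²)^{β/2}`, all integrable by assumption, and `(a + b)^p ≤ 2^{p-1} (a^p + b^p)` adds them up.
-/

open MeasureTheory Set Filter Topology

open scoped ENNReal NNReal

noncomputable section

/-- The time interval `[0,T]`, where `0 < T ≤ +∞` is an extended real
(understood as `[0,+∞)` when `T = +∞`). -/
def timeSet (T : EReal) : Set ℝ := {s : ℝ | 0 ≤ s ∧ (s : EReal) ≤ T}

theorem measurableSet_timeSet (T : EReal) : MeasurableSet (timeSet T) :=
  measurableSet_Ici.inter (measurable_coe_real_ereal measurableSet_Iic)

theorem ENNReal.ofReal_mul_rpow_add_add_add {l a b c e : ℝ} (hl : 0 ≤ l) (ha : 0 ≤ a)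
    (hb : 0 ≤ b) (hc : 0 ≤ c) (he : 0 ≤ e) {α : ℝ} (hα : 0 ≤ α) :
    ENNReal.ofReal (l * (a + b + c + e) ^ α) = ENNReal.ofReal l *
      (ENNReal.ofReal a + ENNReal.ofReal b + ENNReal.ofReal c + ENNReal.ofReal e) ^ α := by
  rw [ENNReal.ofReal_mul hl, ← ENNReal.ofReal_rpow_of_nonneg (by positivity) hα,
    ENNReal.ofReal_add (by positivity) he, ENNReal.ofReal_add (by positivity) hc,
    ENNReal.ofReal_add ha hb]

section Pathwise

variable {X : Type*} [MeasurableSpace X] {μ : Measure X}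

theorem ne_top_of_lintegral_ofReal_add_rpow_add_rpow_lt_top {w : X → ℝ} (hw : ∀ x, 0 ≤ w x)
    {q₁ q₂ : ℝ} (hq₁ : 0 ≤ q₁) (hq₂ : 0 ≤ q₂)
    (h : ∫⁻ x, ENNReal.ofReal (w x + w x ^ q₁ + w x ^ q₂) ∂μ < ⊤) :
    ∫⁻ x, ENNReal.ofReal (w x) ∂μ ≠ ⊤ ∧ ∫⁻ x, ENNReal.ofReal (w x) ^ q₁ ∂μ ≠ ⊤ ∧
      ∫⁻ x, ENNReal.ofReal (w x) ^ q₂ ∂μ ≠ ⊤ := by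
  have hle {g : X → ℝ} (hg : ∀ x, g x ≤ w x + w x ^ q₁ + w x ^ q₂) :
      ∫⁻ x, ENNReal.ofReal (g x) ∂μ ≠ ⊤ :=
    ((lintegral_mono fun x => ENNReal.ofReal_le_ofReal (hg x)).trans_lt h).ne
  have hpos (x : X) : 0 ≤ w x ^ q₁ ∧ 0 ≤ w x ^ q₂ :=
    ⟨Real.rpow_nonneg (hw x) _, Real.rpow_nonneg (hw x) _⟩
  simp only [ENNReal.ofReal_rpow_of_nonneg (hw _) hq₁, ENNReal.ofReal_rpow_of_nonneg (hw _) hq₂]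
  exact ⟨hle fun x => by linarith [hpos x], hle fun x => by linarith [hpos x, hw x],
    hle fun x => by linarith [hpos x, hw x]⟩

theorem lintegral_mul_rpow_le_Lp_mul_Lq_of_lt {α r : ℝ} (hα : 0 < α) (hαr : α < r) {w g : X → ℝ≥0∞}
    (hw : AEMeasurable w μ) (hg : AEMeasurable g μ) :
    ∫⁻ x, w x * g x ^ α ∂μ ≤
      (∫⁻ x, w x ^ (r / (r - α)) ∂μ) ^ ((r - α) / r) * (∫⁻ x, g x ^ r ∂μ) ^ (α / r) := by
  have hconj : (r / (r - α)).HolderConjugate (r / α) := by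
    refine Real.holderConjugate_iff.mpr ⟨?_, ?_⟩
    · rw [lt_div_iff₀ (by linarith)]; linarith
    · rw [inv_div, inv_div, ← add_div, sub_add_cancel, div_self (by linarith)]
  have hgr : ∀ x, (g x ^ α) ^ (r / α) = g x ^ r := fun x => by
    rw [← ENNReal.rpow_mul, mul_div_cancel₀ _ hα.ne']
  have h := ENNReal.lintegral_mul_le_Lp_mul_Lq μ hconj hw (hg.pow_const α)
  simpa only [Pi.mul_apply, hgr, one_div_div] using h

theorem setLIntegral_mul_rpow_le_mul_iSup {S : Set X} (hS : MeasurableSet S) {α β : ℝ}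
    (hα : 0 ≤ α) (hβ : 0 < β) {w : X → ℝ≥0∞} (hw : AEMeasurable w (μ.restrict S))
    (g : X → ℝ≥0∞) :
    ∫⁻ x in S, w x * g x ^ α ∂μ ≤ (∫⁻ x in S, w x ∂μ) * (⨆ t ∈ S, g t ^ β) ^ (α / β) := by
  rw [← lintegral_mul_const'' _ hw]
  refine setLIntegral_mono' hS fun x hx => mul_le_mul_right ?_ _
  calc g x ^ α = (g x ^ β) ^ (α / β) := by rw [← ENNReal.rpow_mul, mul_div_cancel₀ _ hβ.ne']
    _ ≤ (⨆ t ∈ S, g t ^ β) ^ (α / β) :=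
      ENNReal.rpow_le_rpow (le_iSup₂ (f := fun t _ => g t ^ β) x hx) (by positivity)

theorem setLIntegral_mul_rpow_add_le {S : Set X} (hS : MeasurableSet S) {α β : ℝ}
    (hα0 : 0 < α) (hα1 : α < 1) (hβ : 0 < β) {w a b c e : X → ℝ≥0∞}
    (hw : AEMeasurable w (μ.restrict S)) (ha : AEMeasurable a (μ.restrict S))
    (hc : AEMeasurable c (μ.restrict S)) (he : AEMeasurable e (μ.restrict S)) :
    ∫⁻ x in S, w x * (a x + b x + c x + e x) ^ α ∂μ ≤
      (∫⁻ x in S, w x ^ (1 / (1 - α)) ∂μ) ^ (1 - α) * (∫⁻ x in S, a x ∂μ) ^ α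
      + (∫⁻ x in S, w x ∂μ) * (⨆ t ∈ S, b t ^ β) ^ (α / β)
      + (∫⁻ x in S, w x ^ (2 / (2 - α)) ∂μ) ^ ((2 - α) / 2)
          * (∫⁻ x in S, c x ^ 2 ∂μ) ^ (α / 2)
      + (∫⁻ x in S, w x ^ (2 / (2 - α)) ∂μ) ^ ((2 - α) / 2)
          * (∫⁻ x in S, e x ^ 2 ∂μ) ^ (α / 2) := by
  have hsub : ∀ x, w x * (a x + b x + c x + e x) ^ α ≤
      w x * a x ^ α + w x * b x ^ α + w x * c x ^ α + w x * e x ^ α := fun x => by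
    simp only [← mul_add]
    gcongr
    calc (a x + b x + c x + e x) ^ α ≤ (a x + b x + c x) ^ α + e x ^ α :=
          ENNReal.rpow_add_le_add_rpow _ _ hα0.le hα1.le
      _ ≤ (a x + b x) ^ α + c x ^ α + e x ^ α := by
          gcongr; exact ENNReal.rpow_add_le_add_rpow _ _ hα0.le hα1.le
      _ ≤ a x ^ α + b x ^ α + c x ^ α + e x ^ α := by
          gcongr; exact ENNReal.rpow_add_le_add_rpow _ _ hα0.le hα1.le
  have hm {g : X → ℝ≥0∞} (hg : AEMeasurable g (μ.restrict S)) :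
      AEMeasurable (fun x => w x * g x ^ α) (μ.restrict S) :=
    hw.mul (hg.pow_const α)
  calc ∫⁻ x in S, w x * (a x + b x + c x + e x) ^ α ∂μ
      ≤ ∫⁻ x in S, (w x * a x ^ α + w x * b x ^ α + w x * c x ^ α + w x * e x ^ α) ∂μ :=
        lintegral_mono hsub
    _ = (∫⁻ x in S, w x * a x ^ α ∂μ) + (∫⁻ x in S, w x * b x ^ α ∂μ)
          + (∫⁻ x in S, w x * c x ^ α ∂μ) + (∫⁻ x in S, w x * e x ^ α ∂μ) := by
        rw [lintegral_add_right' _ (hm he), lintegral_add_right' _ (hm hc),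
          lintegral_add_left' (hm ha)]
    _ ≤ _ := by
        gcongr
        · simpa only [div_one, ENNReal.rpow_one] using
            lintegral_mul_rpow_le_Lp_mul_Lq_of_lt hα0 hα1 hw ha
        · exact setLIntegral_mul_rpow_le_mul_iSup hS hα0.le hβ hw b
        · simpa only [ENNReal.rpow_two] using
            lintegral_mul_rpow_le_Lp_mul_Lq_of_lt (r := 2) hα0 (by linarith) hw hc
        · simpa only [ENNReal.rpow_two] using
            lintegral_mul_rpow_le_Lp_mul_Lq_of_lt (r := 2) hα0 (by linarith) hw he

end Pathwise

section Moments

variable {Ω : Type*} [MeasurableSpace Ω] {P : Measure Ω}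

theorem lintegral_rpow_lt_top_of_lintegral_lt_top [IsFiniteMeasure P] {β : ℝ} (hβ0 : 0 ≤ β)
    (hβ1 : β ≤ 1) {g : Ω → ℝ≥0∞} (hg : ∫⁻ ω, g ω ∂P < ⊤) : ∫⁻ ω, g ω ^ β ∂P < ⊤ := by
  have hle : ∀ ω, g ω ^ β ≤ 1 + g ω := fun ω => by
    rcases le_total (g ω) 1 with h | h
    · exact (ENNReal.rpow_le_one h hβ0).trans le_self_add
    · calc g ω ^ β ≤ g ω ^ (1 : ℝ) := ENNReal.rpow_le_rpow_of_exponent_le h hβ1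
        _ = g ω := ENNReal.rpow_one _
        _ ≤ 1 + g ω := le_add_self
  calc ∫⁻ ω, g ω ^ β ∂P ≤ ∫⁻ ω, 1 + g ω ∂P := lintegral_mono hle
    _ = P univ + ∫⁻ ω, g ω ∂P := by
        rw [lintegral_add_left measurable_const, lintegral_const, one_mul]
    _ < ⊤ := ENNReal.add_lt_top.2 ⟨measure_lt_top _ _, hg⟩

theorem lintegral_const_mul_rpow_lt_top {c : ℝ≥0∞} (hc : c ≠ ⊤) {p : ℝ} (hp : 0 ≤ p)
    {g : Ω → ℝ≥0∞} (hg : ∫⁻ ω, g ω ^ p ∂P < ⊤) : ∫⁻ ω, (c * g ω) ^ p ∂P < ⊤ := by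
  simp_rw [ENNReal.mul_rpow_of_nonneg _ _ hp]
  rw [lintegral_const_mul' _ _ (ENNReal.rpow_ne_top_of_nonneg hp hc)]
  exact ENNReal.mul_lt_top (ENNReal.rpow_lt_top_of_nonneg hp hc) hg

theorem lintegral_const_mul_rpow_rpow_lt_top {c : ℝ≥0∞} (hc : c ≠ ⊤) {a p q : ℝ} (hp : 0 ≤ p)
    (hq : a * p = q) {g : Ω → ℝ≥0∞} (hg : ∫⁻ ω, g ω ^ q ∂P < ⊤) :
    ∫⁻ ω, (c * g ω ^ a) ^ p ∂P < ⊤ :=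
  lintegral_const_mul_rpow_lt_top hc hp (by simpa only [← ENNReal.rpow_mul, hq] using hg)

theorem lintegral_rpow_add_add_add_lt_top {p : ℝ} (hp : 1 ≤ p) {a b c e : Ω → ℝ≥0∞}
    (ha : AEMeasurable a P) (hc : AEMeasurable c P) (he : AEMeasurable e P)
    (ha' : ∫⁻ ω, a ω ^ p ∂P < ⊤) (hb' : ∫⁻ ω, b ω ^ p ∂P < ⊤)
    (hc' : ∫⁻ ω, c ω ^ p ∂P < ⊤) (he' : ∫⁻ ω, e ω ^ p ∂P < ⊤) :
    ∫⁻ ω, (a ω + b ω + c ω + e ω) ^ p ∂P < ⊤ := by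
  have hsum : ∀ ω, a ω + b ω + c ω + e ω = (a + (c + (e + b))) ω := fun ω => by
    simp only [Pi.add_apply]; ring
  simp_rw [hsum]
  refine ENNReal.lintegral_rpow_add_lt_top_of_lintegral_rpow_lt_top ha ha' ?_ hp
  refine ENNReal.lintegral_rpow_add_lt_top_of_lintegral_rpow_lt_top hc hc' ?_ hp
  exact ENNReal.lintegral_rpow_add_lt_top_of_lintegral_rpow_lt_top he he' hb' hp

theorem lintegral_rpow_add_add_add_lt_top_of_moments {α β : ℝ} (hα : 0 < α) (hαβ : α < β)
    {c₁ c₂ c₃ c₄ : ℝ≥0∞} (hc₁ : c₁ ≠ ⊤) (hc₂ : c₂ ≠ ⊤) (hc₃ : c₃ ≠ ⊤) (hc₄ : c₄ ≠ ⊤)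
    {F M G G' : Ω → ℝ≥0∞} (hF : AEMeasurable F P) (hG : AEMeasurable G P)
    (hG' : AEMeasurable G' P) (hF_int : ∫⁻ ω, F ω ^ β ∂P < ⊤) (hM_int : ∫⁻ ω, M ω ∂P < ⊤)
    (hG_int : ∫⁻ ω, G ω ^ (β / 2) ∂P < ⊤) (hG'_int : ∫⁻ ω, G' ω ^ (β / 2) ∂P < ⊤) :
    ∫⁻ ω, (c₁ * F ω ^ α + c₂ * M ω ^ (α / β) + c₃ * G ω ^ (α / 2) + c₄ * G' ω ^ (α / 2))
      ^ (β / α) ∂P < ⊤ := by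
  have hp : 1 ≤ β / α := (one_le_div hα).2 hαβ.le
  have hp0 : 0 ≤ β / α := zero_le_one.trans hp
  have hβ : 0 < β := hα.trans hαβ
  refine lintegral_rpow_add_add_add_lt_top hp ((hF.pow_const α).const_mul c₁)
    ((hG.pow_const _).const_mul c₃) ((hG'.pow_const _).const_mul c₄) ?_ ?_ ?_ ?_
  · exact lintegral_const_mul_rpow_rpow_lt_top hc₁ hp0 (mul_div_cancel₀ _ hα.ne') hF_int
  · exact lintegral_const_mul_rpow_rpow_lt_top hc₂ hp0 (q := 1) (by field_simp)
      (by simpa only [ENNReal.rpow_one] using hM_int)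
  · exact lintegral_const_mul_rpow_rpow_lt_top hc₃ hp0 (by field_simp) hG_int
  · exact lintegral_const_mul_rpow_rpow_lt_top hc₄ hp0 (by field_simp) hG'_int

end Moments

theorem integrability_estimate_21_general
    {Ω : Type*} [MeasurableSpace Ω] (P : Measure Ω) [IsProbabilityMeasure P]
    (T : EReal)
    (d : ℕ)
    (α β : ℝ) (hα : α ∈ Ioo (0 : ℝ) 1) (hβ : β ∈ Ioo α 1)
    (lam : ℝ → ℝ) (hlam_meas : Measurable lam) (hlam_nonneg : ∀ s, 0 ≤ lam s)
    (hlam_int : ∫⁻ s in timeSet T,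
      ENNReal.ofReal (lam s + lam s ^ (1 / (1 - α)) + lam s ^ (2 / (2 - α))) < ⊤)
    (f : ℝ → Ω → ℝ)
    (hf_meas : Measurable (Function.uncurry f))
    (hf_nonneg : ∀ s ω, 0 ≤ f s ω)
    (hf_int : ∫⁻ ω, (∫⁻ s in timeSet T, ENNReal.ofReal (f s ω)) ∂P < ⊤)
    (Y : ℝ → Ω → ℝ)
    (hY_int : ∫⁻ ω, (⨆ t ∈ timeSet T, ENNReal.ofReal (|Y t ω| ^ β)) ∂P < ⊤)
    (Z Z' : ℝ → Ω → EuclideanSpace ℝ (Fin d))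
    (hZ_meas : Measurable (Function.uncurry Z))
    (hZ'_meas : Measurable (Function.uncurry Z'))
    (hZ_int : ∫⁻ ω,
      (∫⁻ s in timeSet T, ENNReal.ofReal (‖Z s ω‖ ^ 2)) ^ (β / 2) ∂P < ⊤)
    (hZ'_int : ∫⁻ ω,
      (∫⁻ s in timeSet T, ENNReal.ofReal (‖Z' s ω‖ ^ 2)) ^ (β / 2) ∂P < ⊤)
    (φ : ℝ → Ω → ℝ)
    (hφ : ∀ s ω, φ s ω = 2 * lam s * (f s ω + |Y s ω| + ‖Z s ω‖ + ‖Z' s ω‖) ^ α) :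
    ∫⁻ ω, (∫⁻ s in timeSet T, ENNReal.ofReal (φ s ω)) ^ (β / α) ∂P < ⊤ := by
  obtain ⟨hα0, hα1⟩ := hα
  obtain ⟨hβα, hβ1⟩ := hβ
  have hβ0 : 0 < β := hα0.trans hβα
  obtain ⟨hL, hL₁, hL₂⟩ := ne_top_of_lintegral_ofReal_add_rpow_add_rpow_lt_top hlam_nonneg
    (by bound) (by bound) hlam_int
  have hpath (ω : Ω) := calc
    ∫⁻ s in timeSet T, ENNReal.ofReal (φ s ω)
      = 2 * ∫⁻ s in timeSet T, ENNReal.ofReal (lam s) * (ENNReal.ofReal (f s ω)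
          + ENNReal.ofReal |Y s ω| + ENNReal.ofReal ‖Z s ω‖ + ENNReal.ofReal ‖Z' s ω‖) ^ α := by
        rw [← lintegral_const_mul' _ _ ENNReal.ofNat_ne_top]
        refine lintegral_congr fun s => ?_
        rw [hφ, mul_assoc, ENNReal.ofReal_mul zero_le_two, ENNReal.ofReal_ofNat,
          ENNReal.ofReal_mul_rpow_add_add_add (hlam_nonneg s) (hf_nonneg s ω) (abs_nonneg _)
            (norm_nonneg _) (norm_nonneg _) hα0.le]
    _ ≤ 2 * _ := mul_le_mul_right (setLIntegral_mul_rpow_add_le (measurableSet_timeSet T)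
        hα0 hα1 hβ0 hlam_meas.ennreal_ofReal.aemeasurable
        hf_meas.of_uncurry_right.ennreal_ofReal.aemeasurable
        hZ_meas.of_uncurry_right.norm.ennreal_ofReal.aemeasurable
        hZ'_meas.of_uncurry_right.norm.ennreal_ofReal.aemeasurable) 2
  refine (lintegral_mono fun ω => ENNReal.rpow_le_rpow (hpath ω) (by positivity)).trans_lt
    (lintegral_const_mul_rpow_lt_top ENNReal.ofNat_ne_top (by positivity) ?_)
  have hL₂' := ENNReal.rpow_ne_top_of_nonneg (by linarith : 0 ≤ (2 - α) / 2) hL₂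
  exact lintegral_rpow_add_add_add_lt_top_of_moments hα0 hβα
    (ENNReal.rpow_ne_top_of_nonneg (by linarith) hL₁) hL hL₂' hL₂'
    hf_meas.ennreal_ofReal.lintegral_prod_left'.aemeasurable
    (hZ_meas.norm.ennreal_ofReal.pow_const 2).lintegral_prod_left'.aemeasurable
    (hZ'_meas.norm.ennreal_ofReal.pow_const 2).lintegral_prod_left'.aemeasurable
    (lintegral_rpow_lt_top_of_lintegral_lt_top hβ0.le hβ1.le hf_int)
    (by simpa only [ENNReal.ofReal_rpow_of_nonneg (abs_nonneg _) hβ0.le] using hY_int)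
    (by simpa only [ENNReal.ofReal_pow, norm_nonneg] using hZ_int)
    (by simpa only [ENNReal.ofReal_pow, norm_nonneg] using hZ'_int)

/-- **Integrability estimate (21) in the proof of Theorem 2.4.** With `α ∈ (0,1)`,
`β ∈ (α,1)`, `λ` satisfying `∫₀^T (λ + λ^{1/(1-α)} + λ^{2/(2-α)}) dt < ∞`, a nonnegative
process `f` with `E[∫₀^T f] < ∞`, a process `Y` with `E[sup_t |Y_t|^β] < ∞` and processes
`Z, Z'` with `E[(∫₀^T |Z|²)^{β/2}] < ∞`, `E[(∫₀^T |Z'|²)^{β/2}] < ∞`, the process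
`φ_s = 2λ(s)(f_s + |Y_s| + |Z_s| + |Z'_s|)^α` satisfies `E[(∫₀^T φ_s ds)^{β/α}] < ∞`. -/
theorem integrability_estimate_21
    {Ω : Type*} [MeasurableSpace Ω] (P : Measure Ω) [IsProbabilityMeasure P]
    (T : EReal) (hT : 0 < T)
    (d : ℕ) (hd : 1 ≤ d)
    (α β : ℝ) (hα : α ∈ Ioo (0 : ℝ) 1) (hβ : β ∈ Ioo α 1)
    (lam : ℝ → ℝ) (hlam_meas : Measurable lam) (hlam_nonneg : ∀ s, 0 ≤ lam s)
    (hlam_int : ∫⁻ s in timeSet T,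
      ENNReal.ofReal (lam s + lam s ^ (1 / (1 - α)) + lam s ^ (2 / (2 - α))) < ⊤)
    (f : ℝ → Ω → ℝ)
    (hf_meas : Measurable (Function.uncurry f))
    (hf_nonneg : ∀ s ω, 0 ≤ f s ω)
    (hf_int : ∫⁻ ω, (∫⁻ s in timeSet T, ENNReal.ofReal (f s ω)) ∂P < ⊤)
    (Y : ℝ → Ω → ℝ)
    (hY_meas : Measurable (Function.uncurry Y))
    (hY_int : ∫⁻ ω, (⨆ t ∈ timeSet T, ENNReal.ofReal (|Y t ω| ^ β)) ∂P < ⊤)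
    (Z Z' : ℝ → Ω → EuclideanSpace ℝ (Fin d))
    (hZ_meas : Measurable (Function.uncurry Z))
    (hZ'_meas : Measurable (Function.uncurry Z'))
    (hZ_int : ∫⁻ ω,
      (∫⁻ s in timeSet T, ENNReal.ofReal (‖Z s ω‖ ^ 2)) ^ (β / 2) ∂P < ⊤)
    (hZ'_int : ∫⁻ ω,
      (∫⁻ s in timeSet T, ENNReal.ofReal (‖Z' s ω‖ ^ 2)) ^ (β / 2) ∂P < ⊤)
    (φ : ℝ → Ω → ℝ)
    (hφ : ∀ s ω, φ s ω = 2 * lam s * (f s ω + |Y s ω| + ‖Z s ω‖ + ‖Z' s ω‖) ^ α) :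
    ∫⁻ ω, (∫⁻ s in timeSet T, ENNReal.ofReal (φ s ω)) ^ (β / α) ∂P < ⊤ :=
  integrability_estimate_21_general P T d α β hα hβ lam hlam_meas hlam_nonneg hlam_int f hf_meas
    hf_nonneg hf_int Y hY_int Z Z' hZ_meas hZ'_meas hZ_int hZ'_int φ hφ
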